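/- arXiv:1809.01503 — 3 statements merged into one kernel-verified Lean document; each statement's English description precedes it below -/
import Mathlib

section
/- Let X₁, ..., X_{N_S} be i.i.d. Gamma(τ, λ) random variables with integer shape τ. Then the PDF of max_i X_i equals (N_S λ^τ / Γ(τ)) · Σ over tuples (n_1,...,n_{τ+1}) of nonnegative integers summing to N_S − 1 of A · x^{B + τ − 1} e^{−λ(C+1)x}, where A = multinomial(N_S−1; n_1,...,n_{τ+1}) · Π_{p=2}^{τ+1} (−λ^{p−2}/(p−2)!)^{n_p}, B = Σ_{p=2}^{τ+1} n_p (p−2), and C = Σ_{p=2}^{τ+1} n_p. -/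
/-!
The maximum of independent variables with common CDF `F` has CDF `F ^ N`, hence density
`N f F ^ (N - 1)`. For integer shape `τ` the Gamma CDF is the Erlang expression
`F x = 1 - e^{-λx} ∑_{k < τ} (λx)^k / k!`, a sum of `τ + 1` terms, so the multinomial theorem
turns `F ^ (N - 1)` into the finite sum of the statement.
-/

open MeasureTheory ProbabilityTheory Real Finset
open scoped Nat

theorem lintegral_Icc_ofReal_eq_sub {F f : ℝ → ℝ} {a b : ℝ} (hab : a ≤ b)
    (hF : ∀ y, HasDerivAt F (f y) y) (hf : Continuous f)
    (hf_nonneg : ∀ y ∈ Set.Icc a b, 0 ≤ f y) :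
    ∫⁻ y in Set.Icc a b, ENNReal.ofReal (f y) = ENNReal.ofReal (F b - F a) := by
  rw [← ofReal_integral_eq_lintegral_ofReal hf.integrableOn_Icc
      ((ae_restrict_iff' measurableSet_Icc).mpr (ae_of_all _ hf_nonneg)),
    integral_Icc_eq_integral_Ioc, ← intervalIntegral.integral_of_le hab,
    intervalIntegral.integral_eq_sub_of_hasDerivAt (fun y _ => hF y) (hf.intervalIntegrable a b)]

theorem setLIntegral_ofReal_ite_eq_zero (f : ℝ → ℝ) {s : Set ℝ} (hs : MeasurableSet s)
    (hs_neg : s ⊆ Set.Iio 0) :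
    ∫⁻ y in s, ENNReal.ofReal (if 0 ≤ y then f y else 0) = 0 := by
  rw [setLIntegral_congr_fun hs (fun y hy => by rw [if_neg (not_le.mpr (hs_neg hy))]),
    ENNReal.ofReal_zero, lintegral_zero]

theorem withDensity_ofReal_ite_apply_Iic {F f : ℝ → ℝ} (hF : ∀ y, HasDerivAt F (f y) y)
    (hf : Continuous f) (hf_nonneg : ∀ y, 0 ≤ y → 0 ≤ f y) {x : ℝ} (hx : 0 ≤ x) :
    volume.withDensity (fun y => ENNReal.ofReal (if 0 ≤ y then f y else 0)) (Set.Iic x)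
      = ENNReal.ofReal (F x - F 0) := by
  rw [withDensity_apply _ measurableSet_Iic, lintegral_Iic_eq_lintegral_Iio_add_Icc _ hx,
    setLIntegral_ofReal_ite_eq_zero f measurableSet_Iio subset_rfl, zero_add,
    setLIntegral_congr_fun measurableSet_Icc (fun y hy => by rw [if_pos hy.1])]
  exact lintegral_Icc_ofReal_eq_sub hx hF hf fun y hy => hf_nonneg y hy.1

theorem withDensity_ofReal_ite_apply_Iic_of_neg (f : ℝ → ℝ) {x : ℝ} (hx : x < 0) :
    volume.withDensity (fun y => ENNReal.ofReal (if 0 ≤ y then f y else 0)) (Set.Iic x) = 0 := by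
  rw [withDensity_apply _ measurableSet_Iic,
    setLIntegral_ofReal_ite_eq_zero f measurableSet_Iic fun y (hy : y ≤ x) => hy.trans_lt hx]

theorem measure_map_iSup_Iic {ι Ω : Type*} [Fintype ι] [Nonempty ι] [MeasurableSpace Ω]
    {μ : Measure Ω} {X : ι → Ω → ℝ} (hXm : ∀ i, Measurable (X i)) (hX : iIndepFun X μ)
    (x : ℝ) :
    μ.map (fun ω => ⨆ i, X i ω) (Set.Iic x) = ∏ i, μ.map (X i) (Set.Iic x) := by
  have hpre : (fun ω => ⨆ i, X i ω) ⁻¹' Set.Iic x = ⋂ i, X i ⁻¹' Set.Iic x := by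
    ext ω
    simpa only [Set.mem_preimage, Set.mem_Iic, Set.mem_iInter]
      using ciSup_le_iff (Set.finite_range (X · ω)).bddAbove
  simp only [Measure.map_apply (Measurable.iSup hXm) measurableSet_Iic,
    Measure.map_apply (hXm _) measurableSet_Iic, hpre]
  exact hX.meas_iInter fun i => ⟨Set.Iic x, measurableSet_Iic, rfl⟩

theorem map_iSup_eq_withDensity {ι Ω : Type*} [Fintype ι] [Nonempty ι] [MeasurableSpace Ω]
    {μ : Measure Ω} [IsFiniteMeasure μ] {X : ι → Ω → ℝ} (hXm : ∀ i, Measurable (X i))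
    (hX : iIndepFun X μ) {F f : ℝ → ℝ} (hF : ∀ y, HasDerivAt F (f y) y) (hF0 : F 0 = 0)
    (hf : Continuous f) (hf_nonneg : ∀ y, 0 ≤ y → 0 ≤ f y)
    (hlaw : ∀ i, μ.map (X i) =
      volume.withDensity (fun y => ENNReal.ofReal (if 0 ≤ y then f y else 0))) :
    μ.map (fun ω => ⨆ i, X i ω) = volume.withDensity (fun y => ENNReal.ofReal
      (if 0 ≤ y then Fintype.card ι * F y ^ (Fintype.card ι - 1) * f y else 0)) := by
  refine Measure.ext_of_Iic _ _ fun x => ?_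
  rw [measure_map_iSup_Iic hXm hX, Finset.prod_congr rfl fun i _ => by rw [hlaw i],
    Finset.prod_const, Finset.card_univ]
  rcases lt_or_ge x 0 with hx | hx
  · rw [withDensity_ofReal_ite_apply_Iic_of_neg _ hx,
      withDensity_ofReal_ite_apply_Iic_of_neg _ hx, zero_pow Fintype.card_ne_zero]
  have hF_nonneg : ∀ y, 0 ≤ y → 0 ≤ F y := by
    have hmono : MonotoneOn F (Set.Ici 0) :=
      monotoneOn_of_hasDerivWithinAt_nonneg (convex_Ici 0)
        (fun y _ => (hF y).continuousAt.continuousWithinAt)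
        (fun y _ => (hF y).hasDerivWithinAt)
        (fun y hy => hf_nonneg y (interior_subset hy))
    intro y hy
    simpa [hF0] using hmono Set.self_mem_Ici hy hy
  have hF_cont : Continuous F := continuous_iff_continuousAt.2 fun y => (hF y).continuousAt
  rw [withDensity_ofReal_ite_apply_Iic hF hf hf_nonneg hx,
    withDensity_ofReal_ite_apply_Iic (fun y => (hF y).pow (Fintype.card ι)) (by fun_prop)
      (fun y hy => by have := hF_nonneg y hy; have := hf_nonneg y hy; positivity) hx,
    Pi.pow_apply, Pi.pow_apply, hF0, sub_zero, zero_pow Fintype.card_ne_zero, sub_zero,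
    ENNReal.ofReal_pow (hF_nonneg x hx)]

theorem prod_fin_cons_one_mul_pow_mul_pow {k : ℕ} (c : Fin k → ℝ) (x e : ℝ)
    (n : Fin (k + 1) → ℕ) :
    ∏ j, (Fin.cons 1 (fun p : Fin k => c p * x ^ (p : ℕ) * e) : Fin (k + 1) → ℝ) j ^ n j
      = (∏ p, c p ^ n p.succ) * x ^ (∑ p : Fin k, n p.succ * (p : ℕ)) *
          e ^ (∑ p : Fin k, n p.succ) := by
  rw [Fin.prod_univ_succ, Fin.cons_zero, one_pow, one_mul, ← Finset.prod_pow_eq_pow_sum,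
    ← Finset.prod_pow_eq_pow_sum, ← Finset.prod_mul_distrib, ← Finset.prod_mul_distrib]
  refine Finset.prod_congr rfl fun p _ => ?_
  rw [Fin.cons_succ, mul_pow, mul_pow, ← pow_mul, mul_comm (p : ℕ)]

section Erlang

variable (lam : ℝ) (t : ℕ)

-- Density and CDF on `[0, ∞)` of `Gamma(t + 1, lam)`: the paper's integer shape `τ` is `t + 1`.
noncomputable def erlangPDF (x : ℝ) : ℝ := lam ^ (t + 1) / t ! * x ^ t * exp (-(lam * x))

noncomputable def erlangCDF (x : ℝ) : ℝ :=
  1 - exp (-(lam * x)) * ∑ k ∈ range (t + 1), (lam * x) ^ k / k !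

theorem gammaPDF_natCast_succ :
    gammaPDF ((t + 1 : ℕ) : ℝ) lam
      = fun x => ENNReal.ofReal (if 0 ≤ x then erlangPDF lam t x else 0) := by
  funext x
  rw [gammaPDF_eq, Nat.cast_succ, Real.Gamma_nat_eq_factorial, add_sub_cancel_right,
    ← Nat.cast_succ, Real.rpow_natCast, Real.rpow_natCast]
  rfl

theorem continuous_erlangPDF : Continuous (erlangPDF lam t) := by
  unfold erlangPDF; fun_prop

theorem erlangPDF_nonneg {lam : ℝ} (hlam : 0 ≤ lam) {x : ℝ} (hx : 0 ≤ x) :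
    0 ≤ erlangPDF lam t x := by
  unfold erlangPDF; positivity

theorem erlangCDF_zero : erlangCDF lam t 0 = 0 := by
  simp [erlangCDF, Finset.sum_range_succ']

theorem hasDerivAt_exp_mul_sum_range (x : ℝ) :
    HasDerivAt (fun y => exp (-(lam * y)) * ∑ k ∈ range (t + 1), (lam * y) ^ k / k !)
      (-erlangPDF lam t x) x := by
  have hexp : HasDerivAt (fun y => exp (-(lam * y))) (-lam * exp (-(lam * x))) x := by
    simpa [mul_comm] using ((hasDerivAt_id x).const_mul lam).neg.exp
  induction t with
  | zero => simpa [erlangPDF] using hexp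
  | succ t ih =>
    have hterm : HasDerivAt (fun y => (lam * y) ^ (t + 1) / (t + 1)! )
        (lam * (lam * x) ^ t / t !) x := by
      refine ((((hasDerivAt_id' x).const_mul lam).fun_pow (t + 1)).div_const _).congr_deriv ?_
      rw [Nat.factorial_succ, Nat.cast_mul, add_tsub_cancel_right]
      field_simp
    have hsplit : (fun y => exp (-(lam * y)) * ∑ k ∈ range (t + 1 + 1), (lam * y) ^ k / k !)
        = fun y => exp (-(lam * y)) * ∑ k ∈ range (t + 1), (lam * y) ^ k / k !
          + exp (-(lam * y)) * ((lam * y) ^ (t + 1) / (t + 1)!) := by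
      funext y
      rw [Finset.sum_range_succ, mul_add]
    rw [hsplit]
    refine (ih.fun_add (hexp.fun_mul hterm)).congr_deriv ?_
    simp only [erlangPDF, Nat.factorial_succ, Nat.cast_mul, Nat.cast_succ]
    field_simp
    ring

theorem hasDerivAt_erlangCDF (x : ℝ) : HasDerivAt (erlangCDF lam t) (erlangPDF lam t x) x :=
  neg_neg (erlangPDF lam t x) ▸ (hasDerivAt_exp_mul_sum_range lam t x).const_sub 1

theorem erlangCDF_eq_sum_fin_cons (x : ℝ) :
    erlangCDF lam t x = ∑ j, (Fin.cons 1 fun p : Fin (t + 1) =>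
      -(lam ^ (p : ℕ)) / (p : ℕ)! * x ^ (p : ℕ) * exp (-(lam * x)) : Fin (t + 1 + 1) → ℝ) j := by
  rw [Fin.sum_univ_succ, Fin.cons_zero, erlangCDF, sub_eq_add_neg, Finset.mul_sum,
    ← Finset.sum_neg_distrib, ← Fin.sum_univ_eq_sum_range]
  congr 1
  refine Finset.sum_congr rfl fun p _ => ?_
  rw [Fin.cons_succ, mul_pow]
  ring

theorem erlangCDF_pow_eq_sum_piAntidiag (m : ℕ) (x : ℝ) :
    erlangCDF lam t x ^ m = ∑ n ∈ piAntidiag (univ : Finset (Fin (t + 1 + 1))) m,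
      (Nat.multinomial univ n : ℝ) *
        ((∏ p : Fin (t + 1), (-(lam ^ (p : ℕ)) / (p : ℕ)!) ^ n p.succ) *
        x ^ (∑ p : Fin (t + 1), n p.succ * (p : ℕ)) *
        exp (-(lam * x)) ^ (∑ p : Fin (t + 1), n p.succ)) := by
  rw [erlangCDF_eq_sum_fin_cons, sum_pow_eq_sum_piAntidiag]
  refine Finset.sum_congr rfl fun n _ => ?_
  rw [prod_fin_cons_one_mul_pow_mul_pow]

theorem natCast_mul_erlangCDF_pow_mul_erlangPDF (m : ℕ) (x : ℝ) :
    ((m + 1 : ℕ) : ℝ) * erlangCDF lam t x ^ m * erlangPDF lam t x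
      = (((m + 1 : ℕ) : ℝ) * lam ^ (t + 1) / Real.Gamma ((t + 1 : ℕ) : ℝ)) *
        ∑ n ∈ piAntidiag (univ : Finset (Fin (t + 1 + 1))) m,
          ((Nat.multinomial univ n : ℝ) *
              ∏ p : Fin (t + 1), (-(lam ^ (p : ℕ)) / (p : ℕ)!) ^ n p.succ) *
            x ^ ((∑ p : Fin (t + 1), n p.succ * (p : ℕ)) + (t + 1) - 1) *
            exp (-(lam * ((∑ p : Fin (t + 1), n p.succ : ℕ) + 1) * x)) := by
  rw [erlangCDF_pow_eq_sum_piAntidiag, Nat.cast_succ t, Real.Gamma_nat_eq_factorial,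
    Finset.mul_sum, Finset.mul_sum, Finset.sum_mul]
  refine Finset.sum_congr rfl fun n _ => ?_
  have hexp : ∀ C : ℕ,
      exp (-(lam * ((C : ℝ) + 1) * x)) = exp (-(lam * x)) ^ C * exp (-(lam * x)) :=
    fun C => by rw [← exp_nat_mul, ← exp_add]; ring_nf
  rw [add_tsub_assoc_of_le le_add_self, add_tsub_cancel_right, pow_add, hexp, erlangPDF]
  ring

end Erlang

/-- The paper's index `p ∈ {2, …, τ+1}` is `p.succ` for `p : Fin τ` here, and its `n_1` is `n 0`. -/
theorem stmt_7 {Ω : Type*} [MeasurableSpace Ω] (μ : Measure Ω) [IsProbabilityMeasure μ]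
    (NS : ℕ) (hNS : 0 < NS) (τ : ℕ) (hτ : 0 < τ) (lam : ℝ) (hlam : 0 < lam)
    (X : Fin NS → Ω → ℝ) (hXm : ∀ i, Measurable (X i))
    (hiid : iIndepFun X μ)
    (hlaw : ∀ i, Measure.map (X i) μ = volume.withDensity (gammaPDF (τ : ℝ) lam)) :
    Measure.map (fun ω => ⨆ i, X i ω) μ =
      volume.withDensity (fun x => ENNReal.ofReal (if 0 ≤ x then
        ((NS : ℝ) * lam ^ τ / Real.Gamma τ) *
          ∑ n ∈ Finset.piAntidiag (Finset.univ : Finset (Fin (τ + 1))) (NS - 1),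
            ((Nat.multinomial Finset.univ n : ℝ) *
                ∏ p : Fin τ, (-(lam ^ (p : ℕ)) / (Nat.factorial p)) ^ n p.succ) *
              x ^ ((∑ p : Fin τ, n p.succ * (p : ℕ)) + τ - 1) *
              Real.exp (-(lam * ((∑ p : Fin τ, n p.succ : ℕ) + 1) * x))
        else 0)) := by
  obtain ⟨m, rfl⟩ : ∃ m, NS = m + 1 := ⟨NS - 1, by omega⟩
  obtain ⟨t, rfl⟩ : ∃ t, τ = t + 1 := ⟨τ - 1, by omega⟩
  simp only [gammaPDF_natCast_succ] at hlaw
  rw [map_iSup_eq_withDensity hXm hiid (hasDerivAt_erlangCDF lam t) (erlangCDF_zero lam t)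
    (continuous_erlangPDF lam t) (fun _ => erlangPDF_nonneg t hlam.le) hlaw]
  simp only [Fintype.card_fin, add_tsub_cancel_right, natCast_mul_erlangCDF_pow_mul_erlangPDF]
end

section
/- Let X₁, ..., X_{N_S} be i.i.d. Gamma(τ, λ) random variables with integer shape τ. Then the PDF of min_i X_i equals (N_S λ^τ / Γ(τ)) · Σ over tuples (n_1,...,n_τ) of nonnegative integers summing to N_S − 1 of A_E · x^{B_E + τ − 1} e^{−λ(C_E+1)x}, where A_E = multinomial(N_S−1; n_1,...,n_τ) · Π_{p=1}^{τ} (λ^{p−1}/(p−1)!)^{n_p}, B_E = Σ_{p=1}^{τ} n_p (p−1), and C_E = Σ_{p=1}^{τ} n_p. -/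
open MeasureTheory ProbabilityTheory Real Finset

open Filter Set
open scoped Nat Topology

/-! For integer shape `τ = k + 1` the survival function of `Gamma(τ, λ)` on `x ≥ 0` is the Erlang
sum `S(x) = ∑_{i ≤ k} e^{-λx} (λx)^i / i!`, whose derivative is minus the Gamma density.
Independence gives `P(min_i X_i > t) = S(t)^N`, so the minimum has density
`-(S^N)' = N f S^{N-1}`, and the multinomial theorem applied to `S^{N-1}` yields the stated sum. -/

noncomputable def erlangSurvival (τ : ℕ) (lam x : ℝ) : ℝ :=
  ∑ i ∈ range τ, exp (-(lam * x)) * (lam * x) ^ i / i !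

theorem hasDerivAt_exp_neg_mul_mul_pow_div_factorial (lam x : ℝ) (n : ℕ) :
    HasDerivAt (fun y => exp (-(lam * y)) * (lam * y) ^ (n + 1) / (n + 1)!)
      (lam ^ (n + 1) / n ! * x ^ n * exp (-(lam * x))
        - lam ^ (n + 2) / (n + 1)! * x ^ (n + 1) * exp (-(lam * x))) x := by
  have hlin : HasDerivAt (fun y => lam * y) lam x := by
    simpa using (hasDerivAt_id x).const_mul lam
  refine ((hlin.neg.exp).mul (hlin.pow (n + 1))).div_const ((n + 1)! : ℝ) |>.congr_deriv ?_
  simp only [Pi.neg_apply, Pi.pow_apply, Nat.add_sub_cancel, Nat.factorial_succ]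
  push_cast
  field_simp
  ring

theorem hasDerivAt_erlangSurvival_succ (k : ℕ) (lam x : ℝ) :
    HasDerivAt (erlangSurvival (k + 1) lam)
      (-(lam ^ (k + 1) / k ! * x ^ k * exp (-(lam * x)))) x := by
  induction k with
  | zero =>
    have hlin : HasDerivAt (fun y => lam * y) lam x := by
      simpa using (hasDerivAt_id x).const_mul lam
    convert hlin.neg.exp using 1
    · ext y; simp [erlangSurvival]
    · simp [mul_comm]
  | succ k ih =>
    have hsplit : erlangSurvival (k + 2) lam = fun y =>
        erlangSurvival (k + 1) lam y + exp (-(lam * y)) * (lam * y) ^ (k + 1) / (k + 1)! := by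
      ext y; simp [erlangSurvival, sum_range_succ _ (k + 1)]
    rw [hsplit]
    exact (ih.add (hasDerivAt_exp_neg_mul_mul_pow_div_factorial lam x k)).congr_deriv (by ring)

theorem erlangSurvival_nonneg (τ : ℕ) {lam x : ℝ} (hlam : 0 ≤ lam) (hx : 0 ≤ x) :
    0 ≤ erlangSurvival τ lam x :=
  sum_nonneg fun _ _ => by positivity

theorem tendsto_erlangSurvival_atTop (τ : ℕ) {lam : ℝ} (hlam : 0 < lam) :
    Tendsto (erlangSurvival τ lam) atTop (𝓝 0) := by
  have hlin : Tendsto (fun x => lam * x) atTop atTop := tendsto_id.const_mul_atTop hlam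
  unfold erlangSurvival
  simpa using tendsto_finsetSum (range τ) fun i _ =>
    (((tendsto_pow_mul_exp_neg_atTop_nhds_zero i).comp hlin).div_const (i ! : ℝ)).congr
      fun x => by simp [mul_comm]

theorem erlangSurvival_pow_eq_sum_piAntidiag (τ n : ℕ) (lam x : ℝ) :
    erlangSurvival τ lam x ^ n =
      ∑ c ∈ piAntidiag (univ : Finset (Fin τ)) n,
        ((Nat.multinomial univ c : ℝ) * ∏ p : Fin τ, (lam ^ (p : ℕ) / (p : ℕ)!) ^ c p) *
          x ^ (∑ p : Fin τ, c p * (p : ℕ)) * exp (-(lam * (∑ p : Fin τ, c p : ℕ) * x)) := by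
  have hterm : ∀ i : ℕ, exp (-(lam * x)) * (lam * x) ^ i / i ! =
      lam ^ i / i ! * x ^ i * exp (-(lam * x)) := fun i => by rw [mul_pow]; ring
  have hfactor : ∀ (c : Fin τ → ℕ) (p : Fin τ),
      (lam ^ (p : ℕ) / (p : ℕ)! * x ^ (p : ℕ) * exp (-(lam * x))) ^ c p =
        (lam ^ (p : ℕ) / (p : ℕ)!) ^ c p * x ^ (c p * p) * exp (-(lam * x)) ^ c p :=
    fun c p => by rw [mul_pow, mul_pow, ← pow_mul, mul_comm (p : ℕ)]
  simp only [erlangSurvival, hterm]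
  rw [← Fin.sum_univ_eq_sum_range fun i => lam ^ i / i ! * x ^ i * exp (-(lam * x)),
    sum_pow_eq_sum_piAntidiag]
  refine sum_congr rfl fun c _ => ?_
  rw [prod_congr rfl fun p _ => hfactor c p, prod_mul_distrib, prod_mul_distrib,
    prod_pow_eq_pow_sum, prod_pow_eq_pow_sum, ← exp_nat_mul]
  ring_nf

theorem gammaPDFReal_natCast_succ (k : ℕ) (lam : ℝ) {x : ℝ} (hx : 0 ≤ x) :
    gammaPDFReal ((k + 1 : ℕ) : ℝ) lam x = lam ^ (k + 1) / k ! * x ^ k * exp (-(lam * x)) := by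
  rw [gammaPDFReal, if_pos hx, Nat.cast_succ, Real.Gamma_nat_eq_factorial, add_sub_cancel_right,
    Real.rpow_natCast, ← Nat.cast_succ, Real.rpow_natCast]

theorem withDensity_ofReal_ite_nonneg_Ioi {g G : ℝ → ℝ}
    (hG : ∀ x, 0 ≤ x → HasDerivAt G (-g x) x) (hg : ∀ x, 0 ≤ x → 0 ≤ g x)
    (hG_top : Tendsto G atTop (𝓝 0)) (t : ℝ) :
    volume.withDensity (fun x => ENNReal.ofReal (if 0 ≤ x then g x else 0)) (Ioi t) =
      ENNReal.ofReal (G (max t 0)) := by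
  set f : ℝ → ENNReal := fun x => ENNReal.ofReal (if 0 ≤ x then g x else 0)
  have hIoi : ∀ s, 0 ≤ s → ∫⁻ x in Ioi s, f x = ENNReal.ofReal (G s) := by
    intro s hs
    have hderiv : ∀ x ∈ Ici s, HasDerivAt (-G) (g x) x := fun x hx => by
      simpa using (hG x (hs.trans hx)).neg
    have hpos : ∀ x ∈ Ioi s, 0 ≤ g x := fun x hx => hg x (hs.trans hx.le)
    have hlim : Tendsto (-G) atTop (𝓝 0) := neg_zero (G := ℝ) ▸ hG_top.neg
    rw [setLIntegral_congr_fun (g := fun x => ENNReal.ofReal (g x)) measurableSet_Ioi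
        fun x hx => by simp only [f, if_pos (hs.trans hx.le)],
      ← ofReal_integral_eq_lintegral_ofReal (integrableOn_Ioi_deriv_of_nonneg' hderiv hpos hlim)
        ((ae_restrict_iff' measurableSet_Ioi).2 (ae_of_all _ hpos)),
      integral_Ioi_of_hasDerivAt_of_nonneg' hderiv hpos hlim, zero_sub, Pi.neg_apply, neg_neg]
  have hsupp : Function.support f ⊆ Ici 0 :=
    Function.support_subset_iff'.2 fun x hx => by simp [f, if_neg (show ¬0 ≤ x from hx)]
  rw [withDensity_apply _ measurableSet_Ioi]
  rcases le_or_gt 0 t with ht | ht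
  · rw [max_eq_left ht, hIoi t ht]
  · rw [max_eq_right ht.le, ← hIoi 0 le_rfl, restrict_Ioi_eq_restrict_Ici (a := (0 : ℝ)),
      setLIntegral_eq_of_support_subset hsupp,
      setLIntegral_eq_of_support_subset (hsupp.trans (Ici_subset_Ioi.2 ht))]

theorem MeasureTheory.Measure.ext_of_Ioi {μ ν : Measure ℝ} [IsFiniteMeasure μ]
    (h : ∀ a, μ (Ioi a) = ν (Ioi a)) : μ = ν := by
  have hmono : Monotone fun a : ℝ => Ioi (-a) := fun a b hab => Ioi_subset_Ioi (neg_le_neg hab)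
  have hunion : (⋃ a : ℝ, Ioi (-a)) = univ :=
    eq_univ_of_forall fun x => mem_iUnion.2 ⟨-x + 1, by simp⟩
  have huniv : μ univ = ν univ := by
    rw [← hunion, hmono.measure_iUnion, hmono.measure_iUnion]
    simp only [h]
  have : IsFiniteMeasure ν := ⟨huniv ▸ measure_lt_top μ univ⟩
  refine Measure.ext_of_Iic μ ν fun a => ?_
  rw [← compl_Ioi, measure_compl measurableSet_Ioi (measure_ne_top _ _),
    measure_compl measurableSet_Ioi (measure_ne_top _ _), huniv, h]

theorem ProbabilityTheory.iIndepFun.map_iInf_apply_Ioi {ι Ω : Type*} [Fintype ι] [Nonempty ι]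
    [MeasurableSpace Ω] {μ : Measure Ω} {X : ι → Ω → ℝ} (hind : iIndepFun X μ)
    (hX : ∀ i, Measurable (X i)) (t : ℝ) :
    μ.map (fun ω => ⨅ i, X i ω) (Ioi t) = ∏ i, μ.map (X i) (Ioi t) := by
  have hpre : (fun ω => ⨅ i, X i ω) ⁻¹' Ioi t = ⋂ i ∈ (univ : Finset ι), X i ⁻¹' Ioi t := by
    ext ω
    obtain ⟨j, hj⟩ := exists_eq_ciInf_of_finite (f := fun i => X i ω)
    simp only [Set.mem_preimage, Set.mem_Ioi, Finset.mem_univ, iInter_true, mem_iInter, ← hj]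
    exact ⟨fun h i => h.trans_le (hj ▸ ciInf_le (Finite.bddBelow_range _) i), fun h => h j⟩
  rw [Measure.map_apply (Measurable.iInf hX) measurableSet_Ioi, hpre,
    hind.measure_inter_preimage_eq_mul _ fun _ _ => measurableSet_Ioi]
  simp only [Measure.map_apply (hX _) measurableSet_Ioi]

theorem gammaMeasure_natCast_succ_Ioi (k : ℕ) {lam : ℝ} (hlam : 0 < lam) (t : ℝ) :
    gammaMeasure ((k + 1 : ℕ) : ℝ) lam (Ioi t) =
      ENNReal.ofReal (erlangSurvival (k + 1) lam (max t 0)) := by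
  have hpdf : gammaPDF ((k + 1 : ℕ) : ℝ) lam =
      fun x => ENNReal.ofReal (if 0 ≤ x then gammaPDFReal ((k + 1 : ℕ) : ℝ) lam x else 0) := by
    ext x
    split_ifs with hx
    · rfl
    · rw [ENNReal.ofReal_zero, gammaPDF_of_neg (not_le.1 hx)]
  rw [gammaMeasure, hpdf]
  refine withDensity_ofReal_ite_nonneg_Ioi (fun x hx => ?_)
    (fun x _ => gammaPDFReal_nonneg (by positivity) hlam x) (tendsto_erlangSurvival_atTop _ hlam) t
  rw [gammaPDFReal_natCast_succ k lam hx]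
  exact hasDerivAt_erlangSurvival_succ k lam x

theorem hasDerivAt_erlangSurvival_succ_pow (k n : ℕ) (lam x : ℝ) :
    HasDerivAt (fun y => erlangSurvival (k + 1) lam y ^ n)
      (-(n * (lam ^ (k + 1) / k ! * x ^ k * exp (-(lam * x))) *
        erlangSurvival (k + 1) lam x ^ (n - 1))) x :=
  ((hasDerivAt_erlangSurvival_succ k lam x).pow n).congr_deriv (by ring)

theorem mul_erlangSurvival_pow_eq_sum_piAntidiag (k NS : ℕ) (lam x : ℝ) :
    ((NS : ℝ) * lam ^ (k + 1) / Gamma ((k + 1 : ℕ) : ℝ)) *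
        ∑ c ∈ piAntidiag (univ : Finset (Fin (k + 1))) (NS - 1),
          ((Nat.multinomial univ c : ℝ) * ∏ p : Fin (k + 1), (lam ^ (p : ℕ) / (p : ℕ)!) ^ c p) *
            x ^ ((∑ p : Fin (k + 1), c p * (p : ℕ)) + (k + 1) - 1) *
            exp (-(lam * ((∑ p : Fin (k + 1), c p : ℕ) + 1) * x)) =
      NS * (lam ^ (k + 1) / k ! * x ^ k * exp (-(lam * x))) *
        erlangSurvival (k + 1) lam x ^ (NS - 1) := by
  have hexp : ∀ C : ℝ, exp (-(lam * (C + 1) * x)) = exp (-(lam * C * x)) * exp (-(lam * x)) :=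
    fun C => by rw [← exp_add]; ring_nf
  rw [erlangSurvival_pow_eq_sum_piAntidiag, Nat.cast_succ, Real.Gamma_nat_eq_factorial,
    mul_sum, mul_sum]
  refine sum_congr rfl fun c _ => ?_
  rw [← add_assoc, Nat.add_sub_cancel, pow_add, hexp]
  ring

/-- The paper's tuple index `p ∈ {1, …, τ}` is `p : Fin τ` here, with `(p : ℕ) = p - 1`. -/
theorem stmt_8 {Ω : Type*} [MeasurableSpace Ω] (μ : Measure Ω) [IsProbabilityMeasure μ]
    (NS : ℕ) (hNS : 0 < NS) (τ : ℕ) (hτ : 0 < τ) (lam : ℝ) (hlam : 0 < lam)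
    (X : Fin NS → Ω → ℝ) (hXm : ∀ i, Measurable (X i))
    (hiid : iIndepFun X μ)
    (hlaw : ∀ i, Measure.map (X i) μ = volume.withDensity (gammaPDF (τ : ℝ) lam)) :
    Measure.map (fun ω => ⨅ i, X i ω) μ =
      volume.withDensity (fun x => ENNReal.ofReal (if 0 ≤ x then
        ((NS : ℝ) * lam ^ τ / Real.Gamma τ) *
          ∑ n ∈ Finset.piAntidiag (Finset.univ : Finset (Fin τ)) (NS - 1),
            ((Nat.multinomial Finset.univ n : ℝ) *
                ∏ p : Fin τ, (lam ^ (p : ℕ) / (Nat.factorial p)) ^ n p) *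
              x ^ ((∑ p : Fin τ, n p * (p : ℕ)) + τ - 1) *
              Real.exp (-(lam * ((∑ p : Fin τ, n p : ℕ) + 1) * x))
        else 0)) := by
  obtain ⟨k, rfl⟩ : ∃ k, τ = k + 1 := ⟨τ - 1, (Nat.sub_add_cancel hτ).symm⟩
  have : Nonempty (Fin NS) := ⟨⟨0, hNS⟩⟩
  have : IsProbabilityMeasure (μ.map fun ω => ⨅ i, X i ω) :=
    Measure.isProbabilityMeasure_map (Measurable.iInf hXm).aemeasurable
  refine Measure.ext_of_Ioi fun t => ?_
  rw [hiid.map_iInf_apply_Ioi hXm, withDensity_ofReal_ite_nonneg_Ioi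
      (G := fun y => erlangSurvival (k + 1) lam y ^ NS)
      (fun x _ => by
        rw [mul_erlangSurvival_pow_eq_sum_piAntidiag]
        exact hasDerivAt_erlangSurvival_succ_pow k NS lam x)
      (fun x hx => by
        rw [mul_erlangSurvival_pow_eq_sum_piAntidiag]
        have := erlangSurvival_nonneg (k + 1) hlam.le hx
        positivity)
      (by simpa [zero_pow hNS.ne'] using (tendsto_erlangSurvival_atTop (k + 1) hlam).pow NS)]
  simp only [hlaw, ← gammaMeasure.eq_1, gammaMeasure_natCast_succ_Ioi k hlam, prod_const,
    Finset.card_univ, Fintype.card_fin,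
    ENNReal.ofReal_pow (erlangSurvival_nonneg _ hlam.le (le_max_right t 0))]
end

section
/- Let h̃ be a real random variable of the form h̃ = ρh + √(1−ρ²)ε with h ≥ 0 almost surely, ε standard normal independent of h, and 0 < ρ < 1. Then Pr{h̃ ≤ 0} > 0; consequently, if the legitimate SNR is γ̃ = γ̄ · (max(h̃,0))^r, the outage probability Pr{γ̃ ≤ γ} is bounded below by the positive constant Pr{h̃ ≤ 0} = 1 − Z₀ uniformly in the average SNR γ̄, so the outage probability does not decay to zero as γ̄ → ∞. -/
open MeasureTheory ProbabilityTheory Real Set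

/-! Pick `M` with `Pr{h ≤ M} > 0`; since the Gaussian charges every half-line,
`Pr{ε ≤ -ρM/√(1-ρ²)} > 0` too, and by independence the event where both hold, on which
`h̃ ≤ 0`, has positive probability. On `{h̃ ≤ 0}` the SNR `γ̄ (max(h̃,0))^r` vanishes,
whatever `γ̄` is. -/

lemma exists_measure_preimage_Iic_pos {Ω : Type*} [MeasurableSpace Ω] (μ : Measure Ω)
    [NeZero μ] (f : Ω → ℝ) : ∃ M : ℝ, 0 < μ (f ⁻¹' Iic M) := by
  have hunion : (⋃ n : ℕ, f ⁻¹' Iic (n : ℝ)) = univ :=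
    eq_univ_of_forall fun ω ↦ mem_iUnion.2 (exists_nat_ge (f ω))
  obtain ⟨n, hn⟩ := exists_measure_pos_of_not_measure_iUnion_null
    (hunion ▸ NeZero.ne (μ univ) : μ (⋃ n : ℕ, f ⁻¹' Iic (n : ℝ)) ≠ 0)
  exact ⟨n, hn⟩

lemma gaussianReal_Iic_pos (m : ℝ) {v : NNReal} (hv : v ≠ 0) (a : ℝ) :
    0 < gaussianReal m v (Iic a) := by
  refine pos_of_ne_zero fun h0 ↦ ?_
  simpa using gaussianReal_absolutelyContinuous' m hv h0

lemma ProbabilityTheory.IndepFun.measure_mul_add_mul_nonpos_pos {Ω : Type*} [MeasurableSpace Ω]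
    {μ : Measure Ω} [NeZero μ] {X Y : Ω → ℝ} (hXY : IndepFun X Y μ)
    (hY : ∀ t, 0 < μ (Y ⁻¹' Iic t)) {a b : ℝ} (ha : 0 ≤ a) (hb : 0 < b) :
    0 < μ {ω | a * X ω + b * Y ω ≤ 0} := by
  obtain ⟨M, hM⟩ := exists_measure_preimage_Iic_pos μ X
  have hboth : 0 < μ (X ⁻¹' Iic M ∩ Y ⁻¹' Iic (-(a * M) / b)) := by
    rw [hXY.measure_inter_preimage_eq_mul _ _ measurableSet_Iic measurableSet_Iic]
    exact ENNReal.mul_pos hM.ne' (hY _).ne'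
  refine hboth.trans_le (measure_mono fun ω ⟨hX, hYω⟩ ↦ ?_)
  have hbY : b * Y ω ≤ -(a * M) := (le_div_iff₀' hb).1 hYω
  have haX : a * X ω ≤ a * M := mul_le_mul_of_nonneg_left hX ha
  show a * X ω + b * Y ω ≤ 0
  linarith

lemma mul_max_pow_le_of_nonpos {x : ℝ} (hx : x ≤ 0) (c : ℝ) {r : ℕ} (hr : r ≠ 0) {γ : ℝ}
    (hγ : 0 ≤ γ) : c * max x 0 ^ r ≤ γ := by
  rwa [max_eq_right hx, zero_pow hr, mul_zero]

theorem stmt_11_general {Ω : Type*} [MeasurableSpace Ω] (μ : Measure Ω) [IsProbabilityMeasure μ]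
    (h ε : Ω → ℝ) (hεm : Measurable ε)
    (hlawε : Measure.map ε μ = gaussianReal 0 1)
    (hindep : IndepFun h ε μ)
    (ρ : ℝ) (hρ0 : 0 < ρ) (hρ1 : ρ < 1) (r : ℕ) (hr : 0 < r) :
    0 < μ {ω | ρ * h ω + Real.sqrt (1 - ρ ^ 2) * ε ω ≤ 0} ∧
    ∀ γbar γ : ℝ, 0 < γbar → 0 ≤ γ →
      μ {ω | ρ * h ω + Real.sqrt (1 - ρ ^ 2) * ε ω ≤ 0} ≤
        μ {ω | γbar * (max (ρ * h ω + Real.sqrt (1 - ρ ^ 2) * ε ω) 0) ^ r ≤ γ} := by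
  have hε : ∀ t, 0 < μ (ε ⁻¹' Iic t) := fun t ↦ by
    rw [← Measure.map_apply hεm measurableSet_Iic, hlawε]
    exact gaussianReal_Iic_pos 0 one_ne_zero t
  have hc : 0 < Real.sqrt (1 - ρ ^ 2) := Real.sqrt_pos.2 (by nlinarith)
  refine ⟨hindep.measure_mul_add_mul_nonpos_pos hε hρ0.le hc, fun γbar γ _ hγ ↦ ?_⟩
  exact measure_mono fun ω hω ↦ mul_max_pow_le_of_nonpos hω γbar hr.ne' hγ

/-- Error floor with imprecise CSI (Remark 2): if `h̃ = ρh + √(1-ρ²)ε` with `h ≥ 0` a.s.,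
`ε` standard normal independent of `h`, and `0 < ρ < 1`, then `Pr{h̃ ≤ 0} > 0`, and for the
SNR `γ̃ = γ̄ (max(h̃,0))^r` the outage probability `Pr{γ̃ ≤ γ}` is bounded below by
`Pr{h̃ ≤ 0}` uniformly in the average SNR `γ̄ > 0`. -/
theorem stmt_11 {Ω : Type*} [MeasurableSpace Ω] (μ : Measure Ω) [IsProbabilityMeasure μ]
    (h ε : Ω → ℝ) (hhm : Measurable h) (hεm : Measurable ε)
    (hh : ∀ᵐ ω ∂μ, 0 ≤ h ω)
    (hlawε : Measure.map ε μ = gaussianReal 0 1)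
    (hindep : IndepFun h ε μ)
    (ρ : ℝ) (hρ0 : 0 < ρ) (hρ1 : ρ < 1) (r : ℕ) (hr : 0 < r) :
    0 < μ {ω | ρ * h ω + Real.sqrt (1 - ρ ^ 2) * ε ω ≤ 0} ∧
    ∀ γbar γ : ℝ, 0 < γbar → 0 ≤ γ →
      μ {ω | ρ * h ω + Real.sqrt (1 - ρ ^ 2) * ε ω ≤ 0} ≤
        μ {ω | γbar * (max (ρ * h ω + Real.sqrt (1 - ρ ^ 2) * ε ω) 0) ^ r ≤ γ} :=
  stmt_11_general μ h ε hεm hlawε hindep ρ hρ0 hρ1 r hr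
end
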